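/- Let σ ⊆ N_ℚ be a nonzero strongly convex polyhedral cone and ∂ a nontrivial homogeneous LFIHD on A = k[σ^∨ ∩ M] of degree e ∈ M. Then (i) there is a ray ρ ∈ σ(1) with ker ∂ = k[ρ* ∩ M], and (ii) e is a Demazure root of σ whose distinguished ray is ρ; in particular e ∉ σ^∨. -/

import Mathlib

open scoped Pointwise

/-- The standard pairing between `M_ℚ` and `N_ℚ`, both identified with `Fin n → ℚ`. -/
def pairQ {n : ℕ} (m v : Fin n → ℚ) : ℚ := ∑ i, m i * v i

/-- The conical hull (set of nonnegative rational combinations) of a set. -/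
def coneHull {n : ℕ} (S : Set (Fin n → ℚ)) : Set (Fin n → ℚ) :=
  {v | ∃ (T : Finset (Fin n → ℚ)) (c : (Fin n → ℚ) → ℚ),
      ↑T ⊆ S ∧ (∀ x ∈ T, 0 ≤ c x) ∧ v = ∑ x ∈ T, c x • x}

/-- A polyhedral cone is the conical hull of a finite set. -/
def IsPolyhedralCone {n : ℕ} (σ : Set (Fin n → ℚ)) : Prop :=
  ∃ S : Finset (Fin n → ℚ), σ = coneHull ↑S

/-- A cone is strongly convex (pointed) if it contains no line. -/
def IsStronglyConvex {n : ℕ} (σ : Set (Fin n → ℚ)) : Prop :=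
  ∀ v ∈ σ, -v ∈ σ → v = 0

/-- The dual cone `σ^∨ ⊆ M_ℚ` of a cone `σ ⊆ N_ℚ`. -/
def dualCone {n : ℕ} (σ : Set (Fin n → ℚ)) : Set (Fin n → ℚ) :=
  {m | ∀ v ∈ σ, 0 ≤ pairQ m v}

/-- A `σ`-polyhedron: Minkowski sum of a (nonempty) polytope with the cone `σ`. -/
def IsSigmaPolyhedron {n : ℕ} (σ Δ : Set (Fin n → ℚ)) : Prop :=
  ∃ Q : Finset (Fin n → ℚ), Q.Nonempty ∧ Δ = convexHull ℚ ↑Q + σ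

/-- Cast a lattice point of `ℤⁿ` into `ℚⁿ`. -/
def castZ {n : ℕ} (m : Fin n → ℤ) : Fin n → ℚ := fun i => (m i : ℚ)

/-- Integral pairing between lattice vectors of `M` and `N`. -/
def pairZ {n : ℕ} (m ρ : Fin n → ℤ) : ℤ := ∑ i, m i * ρ i

/-- `ρ ∈ N` is the primitive lattice generator of a ray (one-dimensional face) of `σ`. -/
def IsRayGen {n : ℕ} (σ : Set (Fin n → ℚ)) (ρ : Fin n → ℤ) : Prop :=
  castZ ρ ∈ σ ∧ ρ ≠ 0 ∧
  (∀ u : Fin n → ℤ, (∃ q : ℚ, 0 ≤ q ∧ castZ u = q • castZ ρ) → ∃ c : ℕ, u = c • ρ) ∧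
  ∃ u ∈ dualCone σ, σ ∩ {v | pairQ u v = 0} = {v | ∃ q : ℚ, 0 ≤ q ∧ v = q • castZ ρ}

/-- `e ∈ M` is a Demazure root of `σ` with distinguished ray `ρ`: `⟨e,ρ⟩ = −1` and
`⟨e,ρ'⟩ ≥ 0` for every other ray `ρ'` of `σ`. -/
def IsDemazureRootWith {n : ℕ} (σ : Set (Fin n → ℚ)) (e ρ : Fin n → ℤ) : Prop :=
  IsRayGen σ ρ ∧ pairZ e ρ = -1 ∧
  ∀ ρ' : Fin n → ℤ, IsRayGen σ ρ' → ρ' = ρ ∨ 0 ≤ pairZ e ρ'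

/-- A locally finite iterative higher derivation (LFIHD) on a `k`-algebra `A`: a sequence of
`k`-linear operators `D i` with `D 0 = id`, satisfying the Leibniz rule, locally finite, and
iterative. Equivalently, `f ↦ Σᵢ D i f · xⁱ` defines a `G_a`-action on `Spec A`. -/
structure LFIHD (k A : Type*) [CommSemiring k] [CommRing A] [Algebra k A] where
  D : ℕ → A →ₗ[k] A
  D_zero : D 0 = LinearMap.id
  leibniz : ∀ (i : ℕ) (f g : A),
    D i (f * g) = ∑ j ∈ Finset.range (i + 1), D j f * D (i - j) g
  locally_finite : ∀ f : A, ∃ N : ℕ, ∀ i : ℕ, N ≤ i → D i f = 0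
  iterative : ∀ (i j : ℕ) (f : A), D i (D j f) = (i + j).choose i • D (i + j) f

/-- The kernel of an LFIHD: the ring of invariants of the associated `G_a`-action. -/
def LFIHD.ker {k A : Type*} [CommSemiring k] [CommRing A] [Algebra k A]
    (δ : LFIHD k A) : Set A :=
  {f : A | ∀ i : ℕ, 0 < i → δ.D i f = 0}

/-- An LFIHD is nontrivial if it is nonzero in some positive degree. -/
def LFIHD.IsNontrivial {k A : Type*} [CommSemiring k] [CommRing A] [Algebra k A]
    (δ : LFIHD k A) : Prop :=
  ∃ (f : A) (i : ℕ), 0 < i ∧ δ.D i f ≠ 0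

/-- An LFIHD on the `M`-graded algebra `k[σ^∨ ∩ M]` is homogeneous of degree `e ∈ M` if
`δ^{(i)}` maps the graded piece of degree `m` into the piece of degree `m + i·e`. -/
def IsHomogeneousOfDegree {n : ℕ} {k : Type*} [Field k] {P : AddSubmonoid (Fin n → ℤ)}
    (δ : LFIHD k (AddMonoidAlgebra k P)) (e : Fin n → ℤ) : Prop :=
  ∀ (i : ℕ) (m m' : P),
    (δ.D i (AddMonoidAlgebra.single m 1)).coeff m' ≠ 0 → (m' : Fin n → ℤ) = (m : Fin n → ℤ) + i • e


/-!
For a homogeneous LFIHD `δ` of degree `e` one has `δ⁽ⁱ⁾ χᵐ = cᵢ(m) χ^(m + i e)`, and the Leibniz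
rule says that `m ↦ Σᵢ cᵢ(m) tⁱ` is multiplicative. Hence `d(m)`, the degree of this polynomial,
is an additive function on `σ^∨ ∩ M`; the kernel of `δ` is spanned by the monomials of degree `0`,
and by iterativity `m + d(m) e` has degree `0` for every `m`.

Such a `d` is a linear form. Since `d` is not identically zero, some generator `s ≠ 0` of `σ`
pairs to zero with every point of degree `0`, and evaluating `⟨m + d(m) e, s⟩ = 0` shows
`⟨m, s⟩ = -d(m) ⟨e, s⟩`, so `d = ⟨·, v⟩` for some `v ∈ σ` with `⟨e, v⟩ = -1`. The points of degree
`0` cut out the ray through `v`, and a lattice point pairing to `1` with that ray shows that `v` is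
its primitive generator `ρ`. Finally, a ray `ρ'` with `⟨e, ρ'⟩ < 0` would force every lattice
point of the facet `ρ'^⊥` to have degree `0`, putting `ρ` on the ray `ρ'`.
-/

open Matrix Polynomial

section Pairing

variable {n : ℕ}

@[simp] lemma pairQ_add_left (x y v : Fin n → ℚ) : pairQ (x + y) v = pairQ x v + pairQ y v :=
  add_dotProduct x y v

@[simp] lemma pairQ_smul_left (q : ℚ) (x v : Fin n → ℚ) : pairQ (q • x) v = q * pairQ x v :=
  smul_dotProduct q x v

@[simp] lemma pairQ_smul_right (q : ℚ) (u x : Fin n → ℚ) : pairQ u (q • x) = q * pairQ u x :=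
  dotProduct_smul q u x

@[simp] lemma pairQ_sub_left (x y v : Fin n → ℚ) : pairQ (x - y) v = pairQ x v - pairQ y v :=
  sub_dotProduct x y v

@[simp] lemma pairQ_sub_right (u x y : Fin n → ℚ) : pairQ u (x - y) = pairQ u x - pairQ u y :=
  dotProduct_sub u x y

@[simp] lemma pairQ_neg_left (x v : Fin n → ℚ) : pairQ (-x) v = -pairQ x v :=
  neg_dotProduct x v

@[simp] lemma pairQ_neg_right (u x : Fin n → ℚ) : pairQ u (-x) = -pairQ u x :=
  dotProduct_neg u x

@[simp] lemma pairQ_zero_right (u : Fin n → ℚ) : pairQ u 0 = 0 := dotProduct_zero u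

lemma pairQ_sum_right {ι : Type*} (u : Fin n → ℚ) (T : Finset ι) (f : ι → Fin n → ℚ) :
    pairQ u (∑ i ∈ T, f i) = ∑ i ∈ T, pairQ u (f i) :=
  dotProduct_sum u T f

lemma pairQ_self_pos {v : Fin n → ℚ} (hv : v ≠ 0) : 0 < pairQ v v :=
  (Fintype.sum_nonneg fun i => mul_self_nonneg (v i)).lt_of_ne
    (Ne.symm (dotProduct_self_eq_zero.not.mpr hv))

@[simp] lemma castZ_zero : castZ (0 : Fin n → ℤ) = 0 := by
  funext i; simp [castZ]

@[simp] lemma castZ_add (a b : Fin n → ℤ) : castZ (a + b) = castZ a + castZ b := by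
  funext i; simp [castZ]

@[simp] lemma castZ_nsmul (c : ℕ) (a : Fin n → ℤ) : castZ (c • a) = (c : ℚ) • castZ a := by
  funext i; simp [castZ]

lemma castZ_injective : Function.Injective (castZ : (Fin n → ℤ) → Fin n → ℚ) :=
  fun _ _ h => funext fun i => by simpa [castZ] using congr_fun h i

lemma pairQ_castZ (a b : Fin n → ℤ) : pairQ (castZ a) (castZ b) = pairZ a b := by
  simp [pairQ, pairZ, castZ]

end Pairing

section Farkas

variable {n : ℕ} {α : Type*}

def IsNonnegComb (S : Finset α) (g : α → Fin n → ℚ) (v : Fin n → ℚ) : Prop :=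
  ∃ c : α → ℚ, (∀ a ∈ S, 0 ≤ c a) ∧ v = ∑ a ∈ S, c a • g a

lemma IsNonnegComb.insert [DecidableEq α] {S : Finset α} {g : α → Fin n → ℚ} {v : Fin n → ℚ}
    (hv : IsNonnegComb S g v) {a : α} (ha : a ∉ S) {μ : ℚ} (hμ : 0 ≤ μ) :
    IsNonnegComb (insert a S) g (μ • g a + v) := by
  obtain ⟨c, hc, rfl⟩ := hv
  refine ⟨Function.update c a μ, fun x hx => ?_, ?_⟩
  · rcases eq_or_ne x a with rfl | hxa
    · simpa using hμ
    · rw [Function.update_of_ne hxa]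
      exact hc x ((Finset.mem_insert.mp hx).resolve_left hxa)
  · rw [Finset.sum_insert ha, Function.update_self]
    exact congr_arg _ (Finset.sum_congr rfl fun x hx => by
      rw [Function.update_of_ne (ne_of_mem_of_not_mem hx ha)])

lemma exists_pairQ_neg_of_not_isNonnegComb [DecidableEq α] (S : Finset α) :
    ∀ (g : α → Fin n → ℚ) (v : Fin n → ℚ), ¬IsNonnegComb S g v →
      ∃ u, (∀ a ∈ S, 0 ≤ pairQ u (g a)) ∧ pairQ u v < 0 := by
  induction S using Finset.induction_on with
  | empty =>
    intro g v hv
    have hv0 : v ≠ 0 := fun h => hv ⟨0, by simp, by simp [h]⟩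
    exact ⟨-v, by simp, by simpa using pairQ_self_pos hv0⟩
  | insert a S haS ih =>
    intro g v hv
    obtain ⟨u, hu, huv⟩ := ih g v fun h => hv (by simpa using h.insert haS le_rfl)
    by_cases hua : 0 ≤ pairQ u (g a)
    · exact ⟨u, (Finset.forall_mem_insert _ _ _).mpr ⟨hua, hu⟩, huv⟩
    rw [not_le] at hua
    -- project along `g a` onto `u^⊥`; a separating form for the projected family lifts back
    set π : (Fin n → ℚ) → Fin n → ℚ := fun x => x - (pairQ u x / pairQ u (g a)) • g a with hπ
    have hπv : ¬IsNonnegComb S (π ∘ g) (π v) := by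
      rintro ⟨c, hc, hcv⟩
      set μ := pairQ u v / pairQ u (g a) - ∑ x ∈ S, c x * (pairQ u (g x) / pairQ u (g a))
      have hμ : 0 ≤ μ := by
        have h1 : 0 < pairQ u v / pairQ u (g a) := div_pos_of_neg_of_neg huv hua
        have h2 : ∑ x ∈ S, c x * (pairQ u (g x) / pairQ u (g a)) ≤ 0 :=
          Finset.sum_nonpos fun x hx => mul_nonpos_of_nonneg_of_nonpos (hc x hx)
            (div_nonpos_of_nonneg_of_nonpos (hu x hx) hua.le)
        linarith
      have hv' : v = μ • g a + ∑ x ∈ S, c x • g x := by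
        simp only [hπ, Function.comp_apply, smul_sub, Finset.sum_sub_distrib, smul_smul,
          ← Finset.sum_smul] at hcv
        rw [sub_eq_iff_eq_add] at hcv
        rw [hcv, sub_smul]
        abel
      exact hv (hv' ▸ IsNonnegComb.insert ⟨c, hc, rfl⟩ haS hμ)
    obtain ⟨u₁, hu₁, hu₁v⟩ := ih (π ∘ g) (π v) hπv
    have key : ∀ x, pairQ (u₁ - (pairQ u₁ (g a) / pairQ u (g a)) • u) x = pairQ u₁ (π x) := by
      intro x
      simp only [hπ, pairQ_sub_left, pairQ_sub_right, pairQ_smul_left, pairQ_smul_right]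
      ring
    refine ⟨_, (Finset.forall_mem_insert _ _ _).mpr ⟨?_, fun x hx => key (g x) ▸ hu₁ x hx⟩,
      key v ▸ hu₁v⟩
    rw [key, hπ]
    simp [div_self hua.ne]

end Farkas

section Cone

variable {n : ℕ} {S : Set (Fin n → ℚ)}

lemma mem_coneHull_of_mem {s : Fin n → ℚ} (hs : s ∈ S) : s ∈ coneHull S :=
  ⟨{s}, fun _ => 1, by simpa, by simp, by simp⟩

lemma smul_mem_coneHull {v : Fin n → ℚ} {q : ℚ} (hq : 0 ≤ q) (hv : v ∈ coneHull S) :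
    q • v ∈ coneHull S := by
  obtain ⟨T, c, hTS, hc, rfl⟩ := hv
  exact ⟨T, fun x => q * c x, hTS, fun x hx => mul_nonneg hq (hc x hx), by
    simp only [Finset.smul_sum, smul_smul]⟩

lemma pairQ_nonneg_of_mem_coneHull {u v : Fin n → ℚ} (hu : ∀ s ∈ S, 0 ≤ pairQ u s)
    (hv : v ∈ coneHull S) : 0 ≤ pairQ u v := by
  obtain ⟨T, c, hTS, hc, rfl⟩ := hv
  rw [pairQ_sum_right]
  exact Finset.sum_nonneg fun x hx => by
    rw [pairQ_smul_right]; exact mul_nonneg (hc x hx) (hu x (hTS hx))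

lemma mem_dualCone_coneHull_iff {u : Fin n → ℚ} :
    u ∈ dualCone (coneHull S) ↔ ∀ s ∈ S, 0 ≤ pairQ u s :=
  ⟨fun h s hs => h s (mem_coneHull_of_mem hs), fun h _ hv => pairQ_nonneg_of_mem_coneHull h hv⟩

lemma mem_coneHull_of_forall_pairQ_nonneg {S : Finset (Fin n → ℚ)} {v : Fin n → ℚ}
    (h : ∀ u, (∀ s ∈ S, 0 ≤ pairQ u s) → 0 ≤ pairQ u v) : v ∈ coneHull ↑S := by
  by_contra hv
  obtain ⟨u, hu, huv⟩ := exists_pairQ_neg_of_not_isNonnegComb S id v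
    fun ⟨c, hc, hcv⟩ => hv ⟨S, c, subset_rfl, hc, hcv⟩
  exact (h u hu).not_gt huv

lemma eq_zero_of_forall_mem_dualCone {σ : Set (Fin n → ℚ)} {S : Finset (Fin n → ℚ)}
    (hS : σ = coneHull ↑S) (hσ : IsStronglyConvex σ) {x : Fin n → ℚ}
    (hx : ∀ u ∈ dualCone σ, pairQ u x = 0) : x = 0 := by
  subst hS
  refine hσ x ?_ ?_ <;> refine mem_coneHull_of_forall_pairQ_nonneg fun u hu => ?_
  · rw [hx u (mem_dualCone_coneHull_iff.mpr hu)]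
  · rw [pairQ_neg_right, hx u (mem_dualCone_coneHull_iff.mpr hu), neg_zero]

lemma coneHull_inter_perp_eq_ray {u v : Fin n → ℚ} (hu : ∀ s ∈ S, 0 ≤ pairQ u s)
    (hv : v ∈ coneHull S) (huv : pairQ u v = 0)
    (hray : ∀ s ∈ S, pairQ u s = 0 → ∃ q : ℚ, 0 ≤ q ∧ s = q • v) :
    coneHull S ∩ {x | pairQ u x = 0} = {x | ∃ q : ℚ, 0 ≤ q ∧ x = q • v} := by
  ext x
  constructor
  · rintro ⟨⟨T, c, hTS, hc, rfl⟩, hx⟩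
    simp only [Set.mem_ofPred_eq, pairQ_sum_right, pairQ_smul_right] at hx
    have hterm := (Finset.sum_eq_zero_iff_of_nonneg fun y hy =>
      mul_nonneg (hc y hy) (hu y (hTS hy))).mp hx
    refine Finset.sum_induction _ (fun x => ∃ q : ℚ, 0 ≤ q ∧ x = q • v)
      (fun a b ⟨q, hq, ha⟩ ⟨q', hq', hb⟩ => ⟨q + q', add_nonneg hq hq', by rw [ha, hb, add_smul]⟩)
      ⟨0, le_rfl, (zero_smul _ _).symm⟩ fun y hy => ?_
    rcases mul_eq_zero.mp (hterm y hy) with h | h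
    · exact ⟨0, le_rfl, by rw [h, zero_smul, zero_smul]⟩
    · obtain ⟨q, hq, hyq⟩ := hray y (hTS hy) h
      exact ⟨c y * q, mul_nonneg (hc y hy) hq, by rw [hyq, smul_smul]⟩
  · rintro ⟨q, hq, rfl⟩
    exact ⟨smul_mem_coneHull hq hv, by simp [huv]⟩

end Cone

section Lattice

variable {n : ℕ}

lemma exists_castZ_eq_smul (u : Fin n → ℚ) :
    ∃ (m : Fin n → ℤ) (K : ℕ), 0 < K ∧ castZ m = (K : ℚ) • u := by
  set K := ∏ i, (u i).den
  refine ⟨fun i => (K / (u i).den : ℕ) * (u i).num, K, Finset.prod_pos fun i _ => (u i).pos, ?_⟩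
  funext i
  have hdvd : (u i).den ∣ K := Finset.dvd_prod_of_mem _ (Finset.mem_univ i)
  simp only [castZ, Pi.smul_apply, smul_eq_mul, Int.cast_mul, Int.cast_natCast,
    Nat.cast_div hdvd (Nat.cast_ne_zero.mpr (u i).den_nz), ← Rat.mul_den_eq_num]
  field_simp

lemma exists_primitive {s : Fin n → ℚ} (hs : s ≠ 0) :
    ∃ (ρ u₀ : Fin n → ℤ) (μ : ℚ), 0 < μ ∧ castZ ρ = μ • s ∧ pairZ u₀ ρ = 1 := by
  obtain ⟨z, K, hK, hz⟩ := exists_castZ_eq_smul s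
  have hz0 : z ≠ 0 := by
    rintro rfl
    exact hs ((smul_eq_zero.mp (hz.symm.trans castZ_zero)).resolve_left (by positivity))
  set g := Finset.univ.gcd z
  have hg0 : g ≠ 0 := fun h =>
    hz0 (funext fun i => Finset.gcd_eq_zero_iff.mp h i (Finset.mem_univ i))
  have hg : 0 < g := (Int.nonneg_of_normalize_eq_self Finset.normalize_gcd).lt_of_ne' hg0
  have hzg : ∀ i, z i = g * (z i / g) := fun i =>
    (Int.mul_ediv_cancel' (Finset.gcd_dvd (Finset.mem_univ i))).symm
  obtain ⟨c, hc⟩ : ∃ c : Fin n → ℤ, g = ∑ i, z i * c i := Finset.gcd_eq_sum_mul Finset.univ z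
  refine ⟨fun i => z i / g, c, K / g, by positivity, ?_, ?_⟩
  · funext i
    have := congr_fun hz i
    simp only [castZ, Pi.smul_apply, smul_eq_mul] at this ⊢
    rw [hzg i, Int.cast_mul] at this
    field_simp
    linarith
  · refine mul_left_cancel₀ hg0 ?_
    rw [mul_one]
    conv_rhs => rw [hc]
    simp only [pairZ, Finset.mul_sum]
    exact Finset.sum_congr rfl fun i _ => by linear_combination -c i * hzg i

lemma exists_eq_nsmul_of_castZ_eq_smul {ρ u₀ u : Fin n → ℤ} (h : pairZ u₀ ρ = 1) {q : ℚ}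
    (hq : 0 ≤ q) (hu : castZ u = q • castZ ρ) : ∃ c : ℕ, u = c • ρ := by
  have hq' : q = pairZ u₀ u := by
    rw [← pairQ_castZ, hu, pairQ_smul_right, pairQ_castZ, h, Int.cast_one, mul_one]
  have hnn : 0 ≤ pairZ u₀ u := by exact_mod_cast hq' ▸ hq
  refine ⟨(pairZ u₀ u).toNat, castZ_injective ?_⟩
  rw [hu, castZ_nsmul, hq']
  congr 1
  exact_mod_cast (Int.toNat_of_nonneg hnn).symm

lemma IsRayGen.eq_of_castZ_eq_smul {σ : Set (Fin n → ℚ)} {ρ ρ' : Fin n → ℤ} (hρ : IsRayGen σ ρ)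
    (hρ' : IsRayGen σ ρ') {q : ℚ} (hq : 0 ≤ q) (h : castZ ρ = q • castZ ρ') : ρ = ρ' := by
  have hq0 : q ≠ 0 := by
    rintro rfl
    exact hρ.2.1 (castZ_injective (by rw [h, zero_smul, castZ_zero]))
  obtain ⟨c, hc⟩ := hρ'.2.2.1 ρ ⟨q, hq, h⟩
  obtain ⟨c', hc'⟩ := hρ.2.2.1 ρ' ⟨q⁻¹, inv_nonneg.mpr hq, by
    rw [h, smul_smul, inv_mul_cancel₀ hq0, one_smul]⟩
  have hcc : ((c * c' : ℕ) : ℤ) • ρ = (1 : ℤ) • ρ := by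
    rw [one_smul, natCast_zsmul, mul_smul, ← hc', ← hc]
  have h1 : c * c' = 1 := by exact_mod_cast smul_left_injective ℤ hρ.2.1 hcc
  rw [hc, Nat.eq_one_of_mul_eq_one_right h1, one_smul]

lemma IsDemazureRootWith.castZ_notMem_dualCone {σ : Set (Fin n → ℚ)} {e ρ : Fin n → ℤ}
    (h : IsDemazureRootWith σ e ρ) : castZ e ∉ dualCone σ := fun he => by
  have := he _ h.1.1
  rw [pairQ_castZ, h.2.1] at this
  norm_num at this

end Lattice

def IsLatticePointsOf {n : ℕ} (P : AddSubmonoid (Fin n → ℤ)) (C : Set (Fin n → ℚ)) : Prop :=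
  ∀ m : Fin n → ℤ, m ∈ P ↔ castZ m ∈ C

section DualLattice

variable {n : ℕ} {σ : Set (Fin n → ℚ)} {S : Finset (Fin n → ℚ)} {P : AddSubmonoid (Fin n → ℤ)}

lemma IsLatticePointsOf.pairQ_nonneg (hPmem : IsLatticePointsOf P (dualCone σ)) (m : P)
    {v : Fin n → ℚ} (hv : v ∈ σ) : 0 ≤ pairQ (castZ m) v :=
  (hPmem m).mp m.2 v hv

lemma IsLatticePointsOf.exists_mem_castZ_eq_smul (hPmem : IsLatticePointsOf P (dualCone σ))
    {u : Fin n → ℚ} (hu : u ∈ dualCone σ) : ∃ m ∈ P, ∃ K : ℕ, 0 < K ∧ castZ m = (K : ℚ) • u := by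
  obtain ⟨m, K, hK, hm⟩ := exists_castZ_eq_smul u
  refine ⟨m, (hPmem m).mpr fun v hv => ?_, K, hK, hm⟩
  rw [hm, pairQ_smul_left]
  exact mul_nonneg (Nat.cast_nonneg K) (hu v hv)

lemma IsLatticePointsOf.eq_zero_of_forall_pairQ_eq_zero
    (hPmem : IsLatticePointsOf P (dualCone σ)) (hS : σ = coneHull ↑S) (hσ : IsStronglyConvex σ)
    {x : Fin n → ℚ} (hx : ∀ m ∈ P, pairQ (castZ m) x = 0) : x = 0 := by
  refine eq_zero_of_forall_mem_dualCone hS hσ fun u hu => ?_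
  obtain ⟨m, hm, K, hK, hmu⟩ := hPmem.exists_mem_castZ_eq_smul hu
  have := hx m hm
  rw [hmu, pairQ_smul_left] at this
  exact (mul_eq_zero.mp this).resolve_left (by positivity)

lemma IsLatticePointsOf.exists_add_nsmul_mem (hPmem : IsLatticePointsOf P (dualCone σ))
    (hS : σ = coneHull ↑S) {z w : Fin n → ℤ} (hw : ∀ s ∈ S, 0 ≤ pairQ (castZ w) s)
    (hz : ∀ s ∈ S, pairQ (castZ w) s = 0 → 0 ≤ pairQ (castZ z) s) :
    ∃ K : ℕ, z + K • w ∈ P := by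
  have hev : ∀ s ∈ S, ∀ᶠ K : ℕ in Filter.atTop,
      0 ≤ pairQ (castZ z) s + K * pairQ (castZ w) s := by
    intro s hs
    rcases (hw s hs).eq_or_lt with h | h
    · exact Filter.Eventually.of_forall fun K => by
        rw [← h, mul_zero, add_zero]; exact hz s hs h.symm
    · filter_upwards [Filter.eventually_ge_atTop ⌈-pairQ (castZ z) s / pairQ (castZ w) s⌉₊]
        with K hK
      have := Nat.ceil_le.mp hK
      rw [div_le_iff₀ h] at this
      linarith
  obtain ⟨K, hK⟩ := ((Filter.eventually_all_finset S).mpr hev).exists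
  refine ⟨K, (hPmem _).mpr (hS ▸ mem_dualCone_coneHull_iff.mpr fun s hs => ?_)⟩
  rw [castZ_add, castZ_nsmul, pairQ_add_left, pairQ_smul_left]
  exact hK s hs

lemma exists_forall_pairQ_pos (W : AddSubmonoid P) (T : Finset (Fin n → ℚ))
    (hW : ∀ w ∈ W, ∀ s ∈ T, 0 ≤ pairQ (castZ (w : Fin n → ℤ)) s)
    (h : ∀ s ∈ T, ∃ w ∈ W, 0 < pairQ (castZ (w : Fin n → ℤ)) s) :
    ∃ w ∈ W, ∀ s ∈ T, 0 < pairQ (castZ (w : Fin n → ℤ)) s := by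
  induction T using Finset.induction_on with
  | empty => exact ⟨0, W.zero_mem, by simp⟩
  | insert a T _ ih =>
    obtain ⟨w, hw, hwT⟩ := ih (fun w hw s hs => hW w hw s (Finset.mem_insert_of_mem hs))
      (fun s hs => h s (Finset.mem_insert_of_mem hs))
    obtain ⟨w', hw', hw'a⟩ := h a (Finset.mem_insert_self a T)
    refine ⟨w + w', W.add_mem hw hw', (Finset.forall_mem_insert _ _ _).mpr ⟨?_, fun s hs => ?_⟩⟩
    · simp only [AddSubmonoid.coe_add, castZ_add, pairQ_add_left]
      linarith [hW w hw a (Finset.mem_insert_self a T)]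
    · simp only [AddSubmonoid.coe_add, castZ_add, pairQ_add_left]
      linarith [hwT s hs, hW w' hw' s (Finset.mem_insert_of_mem hs)]

end DualLattice

/-- The property of the degree function of a homogeneous LFIHD of degree `e` on which the toric
part of the argument rests. -/
def IsRootDegree {n : ℕ} (P : AddSubmonoid (Fin n → ℤ)) (e : Fin n → ℤ) (d : P →+ ℕ) : Prop :=
  ∀ m : P, ∃ h : (m : Fin n → ℤ) + d m • e ∈ P, d ⟨_, h⟩ = 0

section RootDegree

variable {n : ℕ} {σ : Set (Fin n → ℚ)} {S : Finset (Fin n → ℚ)} {P : AddSubmonoid (Fin n → ℤ)}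
  {e : Fin n → ℤ} {d : P →+ ℕ}

lemma exists_generator_perp_mker (hPmem : IsLatticePointsOf P (dualCone σ))
    (hS : σ = coneHull ↑S) {m₀ : P} (hm₀ : 0 < d m₀) :
    ∃ s ∈ S, s ≠ 0 ∧ ∀ w : P, d w = 0 → pairQ (castZ w) s = 0 := by
  by_contra! h
  have hP : ∀ w : P, ∀ s ∈ S, 0 ≤ pairQ (castZ w) s := fun w s hs =>
    hPmem.pairQ_nonneg w (hS ▸ mem_coneHull_of_mem hs)
  obtain ⟨w, hw, hpos⟩ := exists_forall_pairQ_pos (AddMonoidHom.mker d) (S.filter (· ≠ 0))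
    (fun w _ s hs => hP w s (Finset.mem_filter.mp hs).1) fun s hs => by
      obtain ⟨hsS, hs0⟩ := Finset.mem_filter.mp hs
      obtain ⟨w, hw, hne⟩ := h s hsS hs0
      exact ⟨w, hw, (hP w s hsS).lt_of_ne hne.symm⟩
  -- `w` has degree `0` and is positive on all nonzero generators, so `K w - m₀ ∈ P` for large
  -- `K`, and then `d(K w - m₀) + d(m₀) = K d(w) = 0`
  obtain ⟨K, hK⟩ := hPmem.exists_add_nsmul_mem hS (z := -(m₀ : Fin n → ℤ)) (hP w)
    fun s hs h0 => by
      obtain rfl : s = 0 := by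
        by_contra hs0; exact (hpos s (Finset.mem_filter.mpr ⟨hs, hs0⟩)).ne' h0
      simp
  have hsum : d ⟨_, hK⟩ + d m₀ = K • d w := by
    rw [← map_add, ← map_nsmul]; congr 1; ext; simp
  rw [AddMonoidHom.mem_mker.mp hw, smul_zero] at hsum
  omega

lemma IsRootDegree.pairQ_add_mul_eq_zero (hd : IsRootDegree P e d) {y : Fin n → ℚ}
    (hy : ∀ w : P, d w = 0 → pairQ (castZ w) y = 0) (m : P) :
    pairQ (castZ m) y + d m * pairQ (castZ e) y = 0 := by
  obtain ⟨h, h0⟩ := hd m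
  simpa only [castZ_add, castZ_nsmul, pairQ_add_left, pairQ_smul_left] using hy _ h0

lemma IsRootDegree.exists_mem_eq_pairQ (hd : IsRootDegree P e d)
    (hPmem : IsLatticePointsOf P (dualCone σ)) (hS : σ = coneHull ↑S) (hσ : IsStronglyConvex σ)
    {m₀ : P} (hm₀ : 0 < d m₀) : ∃ v ∈ σ, ∀ m : P, (d m : ℚ) = pairQ (castZ m) v := by
  obtain ⟨s, hsS, hs0, hs⟩ := exists_generator_perp_mker hPmem hS hm₀
  have hsσ : s ∈ σ := hS ▸ mem_coneHull_of_mem hsS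
  have key := hd.pairQ_add_mul_eq_zero hs
  set β := pairQ (castZ e) s
  have hβ0 : β ≠ 0 := fun h => hs0 <| hPmem.eq_zero_of_forall_pairQ_eq_zero hS hσ fun m hm => by
    simpa [h] using key ⟨m, hm⟩
  have hβ : β < 0 := by
    have h1 := key m₀
    have h2 := hPmem.pairQ_nonneg m₀ hsσ
    have h3 : (0 : ℚ) < d m₀ := by exact_mod_cast hm₀
    exact hβ0.lt_of_le (nonpos_of_mul_nonpos_right (by linarith) h3)
  refine ⟨(-β)⁻¹ • s, hS ▸ smul_mem_coneHull (by simpa using hβ.le) (hS ▸ hsσ), fun m => ?_⟩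
  rw [pairQ_smul_right]
  field_simp
  linarith [key m]

lemma IsRootDegree.pairQ_eq_neg_one (hd : IsRootDegree P e d) {v : Fin n → ℚ}
    (hv : ∀ m : P, (d m : ℚ) = pairQ (castZ m) v) {m₀ : P} (hm₀ : 0 < d m₀) :
    pairQ (castZ e) v = -1 := by
  have h := hd.pairQ_add_mul_eq_zero (fun w hw => by rw [← hv, hw, Nat.cast_zero]) m₀
  rw [← hv] at h
  have h0 : (d m₀ : ℚ) ≠ 0 := by positivity
  exact mul_left_cancel₀ h0 (by linarith)

lemma IsRootDegree.exists_eq_smul_of_perp (hd : IsRootDegree P e d)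
    (hPmem : IsLatticePointsOf P (dualCone σ)) (hS : σ = coneHull ↑S) (hσ : IsStronglyConvex σ)
    {v : Fin n → ℚ} (hv : ∀ m : P, (d m : ℚ) = pairQ (castZ m) v) {m₀ : P} (hm₀ : 0 < d m₀)
    {s : Fin n → ℚ} (hs : s ∈ σ) (hperp : ∀ w : P, d w = 0 → pairQ (castZ w) s = 0) :
    ∃ q : ℚ, 0 ≤ q ∧ s = q • v := by
  have key := hd.pairQ_add_mul_eq_zero hperp
  have hs' : s = (-pairQ (castZ e) s) • v := sub_eq_zero.mp <|
    hPmem.eq_zero_of_forall_pairQ_eq_zero hS hσ fun m hm => by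
      have := key ⟨m, hm⟩
      rw [hv] at this
      simp only [pairQ_sub_right, pairQ_smul_right]
      linarith
  refine ⟨_, ?_, hs'⟩
  have h1 := hPmem.pairQ_nonneg m₀ hs
  rw [hs', pairQ_smul_right, ← hv] at h1
  exact nonneg_of_mul_nonneg_left h1 (by exact_mod_cast hm₀)

lemma IsRootDegree.exists_mker_perp_only_ray (hd : IsRootDegree P e d)
    (hPmem : IsLatticePointsOf P (dualCone σ)) (hS : σ = coneHull ↑S) (hσ : IsStronglyConvex σ)
    {v : Fin n → ℚ} (hv : ∀ m : P, (d m : ℚ) = pairQ (castZ m) v) {m₀ : P} (hm₀ : 0 < d m₀) :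
    ∃ w : P, d w = 0 ∧ ∀ s ∈ S, pairQ (castZ w) s = 0 → ∃ q : ℚ, 0 ≤ q ∧ s = q • v := by
  classical
  have hP : ∀ w : P, ∀ s ∈ S, 0 ≤ pairQ (castZ w) s := fun w s hs =>
    hPmem.pairQ_nonneg w (hS ▸ mem_coneHull_of_mem hs)
  obtain ⟨w, hw, hpos⟩ := exists_forall_pairQ_pos (AddMonoidHom.mker d)
    (S.filter fun s => ¬∃ q : ℚ, 0 ≤ q ∧ s = q • v)
    (fun w _ s hs => hP w s (Finset.mem_filter.mp hs).1) fun s hs => by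
      obtain ⟨hsS, hray⟩ := Finset.mem_filter.mp hs
      by_contra! h
      exact hray <| hd.exists_eq_smul_of_perp hPmem hS hσ hv hm₀ (hS ▸ mem_coneHull_of_mem hsS)
        fun w hw => (h w hw).antisymm (hP w s hsS)
  exact ⟨w, hw, fun s hs h0 => by
    by_contra hray; exact (hpos s (Finset.mem_filter.mpr ⟨hs, hray⟩)).ne' h0⟩

lemma IsRootDegree.exists_isRayGen_of_smul (hd : IsRootDegree P e d)
    (hPmem : IsLatticePointsOf P (dualCone σ)) (hS : σ = coneHull ↑S) (hσ : IsStronglyConvex σ)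
    {v : Fin n → ℚ} (hvσ : v ∈ σ) (hv0 : v ≠ 0) (hv : ∀ m : P, (d m : ℚ) = pairQ (castZ m) v)
    {m₀ : P} (hm₀ : 0 < d m₀) :
    ∃ (ρ : Fin n → ℤ) (μ : ℚ), 0 < μ ∧ castZ ρ = μ • v ∧ IsRayGen σ ρ ∧
      ∃ m : P, pairZ m ρ = 1 := by
  obtain ⟨w, hw, hray⟩ := hd.exists_mker_perp_only_ray hPmem hS hσ hv hm₀
  have hwv : pairQ (castZ w) v = 0 := by rw [← hv, hw, Nat.cast_zero]
  have hP : ∀ s ∈ S, 0 ≤ pairQ (castZ w) s := fun s hs =>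
    hPmem.pairQ_nonneg w (hS ▸ mem_coneHull_of_mem hs)
  obtain ⟨ρ, u₀, μ, hμ, hρ, hu₀⟩ := exists_primitive hv0
  have hray' : {x | ∃ q : ℚ, 0 ≤ q ∧ x = q • v} = {x | ∃ q : ℚ, 0 ≤ q ∧ x = q • castZ ρ} := by
    ext x
    constructor
    · rintro ⟨q, hq, rfl⟩
      exact ⟨q / μ, div_nonneg hq hμ.le, by rw [hρ, smul_smul, div_mul_cancel₀ _ hμ.ne']⟩
    · rintro ⟨q, hq, rfl⟩
      exact ⟨q * μ, mul_nonneg hq hμ.le, by rw [hρ, smul_smul]⟩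
  refine ⟨ρ, μ, hμ, hρ, ⟨?_, ?_, fun u ⟨q, hq, hu⟩ => exists_eq_nsmul_of_castZ_eq_smul hu₀ hq hu,
    castZ w, (hPmem w).mp w.2, ?_⟩, ?_⟩
  · rw [hρ]; exact hS ▸ smul_mem_coneHull hμ.le (hS ▸ hvσ)
  · rintro rfl; simp [pairZ] at hu₀
  · rw [← hray', hS]; exact coneHull_inter_perp_eq_ray hP (hS ▸ hvσ) hwv hray
  have hu₀v : pairQ (castZ u₀) v = μ⁻¹ := by
    rw [show v = μ⁻¹ • castZ ρ by rw [hρ, smul_smul, inv_mul_cancel₀ hμ.ne', one_smul],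
      pairQ_smul_right, pairQ_castZ, hu₀, Int.cast_one, mul_one]
  obtain ⟨K, hK⟩ := hPmem.exists_add_nsmul_mem hS hP fun s hs h0 => by
    obtain ⟨q, hq, rfl⟩ := hray s hs h0
    rw [pairQ_smul_right, hu₀v]
    positivity
  refine ⟨⟨_, hK⟩, ?_⟩
  have h1 : (pairZ (u₀ + K • (w : Fin n → ℤ)) ρ : ℚ) = 1 := by
    rw [← pairQ_castZ, hρ]
    simp only [castZ_add, castZ_nsmul, pairQ_add_left, pairQ_smul_left, pairQ_smul_right, hwv,
      hu₀v, mul_zero, add_zero]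
    field_simp
  exact_mod_cast h1

lemma IsRootDegree.exists_isRayGen (hd : IsRootDegree P e d)
    (hPmem : IsLatticePointsOf P (dualCone σ)) (hS : σ = coneHull ↑S) (hσ : IsStronglyConvex σ)
    {m₀ : P} (hm₀ : 0 < d m₀) :
    ∃ ρ, IsRayGen σ ρ ∧ pairZ e ρ = -1 ∧ ∀ m : P, (d m : ℤ) = pairZ m ρ := by
  obtain ⟨v, hvσ, hv⟩ := hd.exists_mem_eq_pairQ hPmem hS hσ hm₀
  have hev := hd.pairQ_eq_neg_one hv hm₀
  obtain ⟨ρ, μ, hμ, hρ, hρσ, m₁, hm₁⟩ :=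
    hd.exists_isRayGen_of_smul hPmem hS hσ hvσ (by rintro rfl; simp at hev) hv hm₀
  have heρ : (pairZ e ρ : ℚ) = -μ := by rw [← pairQ_castZ, hρ, pairQ_smul_right, hev, mul_neg_one]
  -- `d(m₁)` and `-⟨e, ρ⟩ = μ` are integers with product `⟨m₁, ρ⟩ = 1`
  have h1 : (d m₁ : ℚ) * -(pairZ e ρ : ℚ) = 1 := by
    rw [hv, heρ, neg_neg, mul_comm, ← pairQ_smul_right, ← hρ, pairQ_castZ, hm₁, Int.cast_one]
  obtain ⟨-, he1⟩ | ⟨hd1, -⟩ := Int.eq_one_or_neg_one_of_mul_eq_one' (by exact_mod_cast h1)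
  · have hμ1 : μ = 1 := by
      have : (pairZ e ρ : ℚ) = -1 := by exact_mod_cast neg_eq_iff_eq_neg.mp he1
      linarith
    rw [hμ1, one_smul] at hρ
    refine ⟨ρ, hρσ, by omega, fun m => ?_⟩
    have := hv m
    rw [← hρ, pairQ_castZ] at this
    exact_mod_cast this
  · omega

lemma IsRootDegree.eq_of_pairZ_neg (hd : IsRootDegree P e d)
    (hPmem : IsLatticePointsOf P (dualCone σ)) {ρ ρ' : Fin n → ℤ} (hρ : IsRayGen σ ρ)
    (hdρ : ∀ m : P, (d m : ℤ) = pairZ m ρ) (hρ' : IsRayGen σ ρ') (he : pairZ e ρ' < 0) :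
    ρ' = ρ := by
  obtain ⟨hρ'σ, -, -, u, hu, hexp⟩ := id hρ'
  obtain ⟨m, hm, K, hK, hmu⟩ := hPmem.exists_mem_castZ_eq_smul hu
  have huρ' : pairQ u (castZ ρ') = 0 := by
    have h : castZ ρ' ∈ {v | ∃ q : ℚ, 0 ≤ q ∧ v = q • castZ ρ'} :=
      ⟨1, zero_le_one, (one_smul _ _).symm⟩
    rw [← hexp] at h
    exact h.2
  have hmρ' : pairZ m ρ' = 0 := by
    rw [← Int.cast_eq_zero (α := ℚ), ← pairQ_castZ, hmu, pairQ_smul_left, huρ', mul_zero]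
  -- `m + d(m) e` stays in the dual cone, so `d(m) ⟨e, ρ'⟩ ≥ 0`
  have hdm : d ⟨m, hm⟩ = 0 := by
    obtain ⟨h, -⟩ := hd ⟨m, hm⟩
    have := hPmem.pairQ_nonneg ⟨_, h⟩ hρ'σ
    rw [castZ_add, castZ_nsmul, pairQ_add_left, pairQ_smul_left, pairQ_castZ, pairQ_castZ,
      hmρ', Int.cast_zero, zero_add] at this
    have he' : (pairZ e ρ' : ℚ) < 0 := by exact_mod_cast he
    by_contra h0
    have : (0 : ℚ) < d ⟨m, hm⟩ := by positivity
    nlinarith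
  have huρ : pairQ u (castZ ρ) = 0 := by
    have h1 : pairQ (castZ m) (castZ ρ) = 0 := by
      rw [pairQ_castZ, ← show ((d ⟨m, hm⟩ : ℕ) : ℤ) = pairZ m ρ from hdρ _, hdm]
      rfl
    rw [hmu, pairQ_smul_left] at h1
    exact (mul_eq_zero.mp h1).resolve_left (by positivity)
  have h : castZ ρ ∈ σ ∩ {v | pairQ u v = 0} := ⟨hρ.1, huρ⟩
  rw [hexp] at h
  obtain ⟨q, hq, hρq⟩ := h
  exact (hρ.eq_of_castZ_eq_smul hρ' hq hρq).symm

end RootDegree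

namespace LFIHD

variable {k : Type*} [Field k] {n : ℕ} {P : AddSubmonoid (Fin n → ℤ)}
  (δ : LFIHD k (AddMonoidAlgebra k P))

/-- The coefficient `cᵢ(m)` in `δ⁽ⁱ⁾ χᵐ = cᵢ(m) χ^(m + i e)` (for homogeneous `δ`), read off
through the augmentation `χᵐ ↦ 1`. -/
noncomputable def orbitCoeff (i : ℕ) (m : P) : k :=
  AddMonoidAlgebra.lift k k P 1 (δ.D i (AddMonoidAlgebra.single m 1))

lemma orbitCoeff_zero (m : P) : δ.orbitCoeff 0 m = 1 := by
  simp [orbitCoeff, δ.D_zero]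

lemma orbitCoeff_add (i : ℕ) (m m' : P) :
    δ.orbitCoeff i (m + m') =
      ∑ j ∈ Finset.range (i + 1), δ.orbitCoeff j m * δ.orbitCoeff (i - j) m' := by
  rw [orbitCoeff, ← one_mul (1 : k), ← AddMonoidAlgebra.single_mul_single, δ.leibniz, map_sum]
  simp only [orbitCoeff, map_mul]

noncomputable def orbitPoly (m : P) : k[X] :=
  ∑ i ∈ Finset.range (δ.locally_finite (AddMonoidAlgebra.single m 1)).choose,
    monomial i (δ.orbitCoeff i m)

@[simp] lemma coeff_orbitPoly (m : P) (i : ℕ) : (δ.orbitPoly m).coeff i = δ.orbitCoeff i m := by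
  have hN := (δ.locally_finite (AddMonoidAlgebra.single m 1)).choose_spec
  simp only [orbitPoly, finsetSum_coeff, coeff_monomial, Finset.sum_ite_eq', Finset.mem_range]
  split_ifs with hi
  · rfl
  · simp [orbitCoeff, hN i (not_lt.mp hi)]

lemma orbitPoly_add (m m' : P) : δ.orbitPoly (m + m') = δ.orbitPoly m * δ.orbitPoly m' := by
  ext i
  rw [coeff_orbitPoly, orbitCoeff_add, coeff_mul, Finset.Nat.sum_antidiagonal_eq_sum_range_succ_mk]
  simp

lemma orbitPoly_ne_zero (m : P) : δ.orbitPoly m ≠ 0 := fun h => by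
  simpa [orbitCoeff_zero] using congr_arg (coeff · 0) h

noncomputable def orbitDegree : P →+ ℕ where
  toFun m := (δ.orbitPoly m).natDegree
  map_zero' := by
    have h := natDegree_mul (δ.orbitPoly_ne_zero 0) (δ.orbitPoly_ne_zero 0)
    rw [← orbitPoly_add, add_zero] at h
    omega
  map_add' m m' := by
    simp only [orbitPoly_add, natDegree_mul (δ.orbitPoly_ne_zero m) (δ.orbitPoly_ne_zero m')]

lemma orbitCoeff_orbitDegree_ne_zero (m : P) : δ.orbitCoeff (δ.orbitDegree m) m ≠ 0 := by
  rw [← coeff_orbitPoly]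
  exact leadingCoeff_ne_zero.mpr (δ.orbitPoly_ne_zero m)

lemma orbitCoeff_eq_zero_of_orbitDegree_lt {m : P} {i : ℕ} (h : δ.orbitDegree m < i) :
    δ.orbitCoeff i m = 0 := by
  rw [← coeff_orbitPoly]
  exact coeff_eq_zero_of_natDegree_lt h

variable {δ} {e : Fin n → ℤ}

lemma coeff_D_single (hhom : IsHomogeneousOfDegree δ e) (i : ℕ) (m q : P) :
    (δ.D i (AddMonoidAlgebra.single m 1)).coeff q =
      if (q : Fin n → ℤ) = m + i • e then δ.orbitCoeff i m else 0 := by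
  split_ifs with hq
  · rw [orbitCoeff, AddMonoidAlgebra.lift_apply, Finsupp.sum, Finset.sum_eq_single q]
    · simp
    · exact fun b hb hbq => absurd
        (Subtype.ext ((hhom i m b (Finsupp.mem_support_iff.mp hb)).trans hq.symm)) hbq
    · intro hq'; simp [Finsupp.notMem_support_iff.mp hq']
  · by_contra hc; exact hq (hhom i m q hc)

lemma coeff_D (hhom : IsHomogeneousOfDegree δ e) (i : ℕ) (f : AddMonoidAlgebra k P) (q : P) :
    (δ.D i f).coeff q = ∑ m ∈ f.coeff.support,
      if (q : Fin n → ℤ) = m + i • e then f.coeff m * δ.orbitCoeff i m else 0 := by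
  conv_lhs => rw [← AddMonoidAlgebra.sum_coeff_single f]
  simp only [Finsupp.sum, map_sum, AddMonoidAlgebra.coeff_sum, Finsupp.finsetSum_apply]
  refine Finset.sum_congr rfl fun m _ => ?_
  rw [← mul_one (f.coeff m), ← AddMonoidAlgebra.smul_single', map_smul,
    AddMonoidAlgebra.coeff_smul, Finsupp.smul_apply, coeff_D_single hhom, smul_eq_mul, mul_one,
    mul_ite, mul_zero]

lemma D_single_eq_zero (hhom : IsHomogeneousOfDegree δ e) {i : ℕ} {m : P}
    (h : δ.orbitCoeff i m = 0) : δ.D i (AddMonoidAlgebra.single m 1) = 0 :=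
  AddMonoidAlgebra.ext <| Finsupp.ext fun q => by rw [coeff_D_single hhom, h, ite_self]; rfl

lemma D_single_eq_single (hhom : IsHomogeneousOfDegree δ e) {i : ℕ} {m q : P}
    (hq : (q : Fin n → ℤ) = m + i • e) :
    δ.D i (AddMonoidAlgebra.single m 1) = AddMonoidAlgebra.single q (δ.orbitCoeff i m) :=
  AddMonoidAlgebra.ext <| Finsupp.ext fun q' => by
    simp only [coeff_D_single hhom, AddMonoidAlgebra.coeff_single, Finsupp.single_apply, ← hq,
      ← Subtype.ext_iff, eq_comm]

lemma exists_coe_eq_add_nsmul (hhom : IsHomogeneousOfDegree δ e) {i : ℕ} {m : P}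
    (h : δ.orbitCoeff i m ≠ 0) : ∃ q : P, (q : Fin n → ℤ) = m + i • e := by
  by_contra! hq
  have hD : δ.D i (AddMonoidAlgebra.single m 1) = 0 :=
    AddMonoidAlgebra.ext <| Finsupp.ext fun q => by rw [coeff_D_single hhom, if_neg (hq q)]; rfl
  simp [orbitCoeff, hD] at h

lemma mem_ker_iff (hhom : IsHomogeneousOfDegree δ e) (f : AddMonoidAlgebra k P) :
    f ∈ δ.ker ↔ ∀ m : P, f.coeff m ≠ 0 → δ.orbitDegree m = 0 := by
  constructor
  · intro hf m hm
    by_contra hd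
    obtain ⟨q, hq⟩ := exists_coe_eq_add_nsmul hhom (δ.orbitCoeff_orbitDegree_ne_zero m)
    -- the coefficient of `δ⁽ᵈ⁽ᵐ⁾⁾ f` at `m + d(m) e` only receives the term coming from `m`
    have hDq := congr_arg (fun g : AddMonoidAlgebra k P => g.coeff q)
      (hf _ (Nat.pos_of_ne_zero hd))
    simp only [coeff_D hhom, AddMonoidAlgebra.coeff_zero, Finsupp.coe_zero, Pi.zero_apply] at hDq
    rw [Finset.sum_eq_single m, if_pos hq] at hDq
    · exact mul_ne_zero hm (δ.orbitCoeff_orbitDegree_ne_zero m) hDq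
    · exact fun b _ hbm => if_neg fun h => hbm (Subtype.ext (add_right_cancel (h.symm.trans hq)))
    · intro h; exact absurd (Finsupp.notMem_support_iff.mp h) hm
  · intro hf i hi
    refine AddMonoidAlgebra.ext <| Finsupp.ext fun q => ?_
    rw [coeff_D hhom]
    refine Finset.sum_eq_zero fun m hm => ?_
    rw [δ.orbitCoeff_eq_zero_of_orbitDegree_lt (hf m (Finsupp.mem_support_iff.mp hm) ▸ hi),
      mul_zero, ite_self]

lemma exists_orbitDegree_pos (hhom : IsHomogeneousOfDegree δ e) (hnt : δ.IsNontrivial) :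
    ∃ m : P, 0 < δ.orbitDegree m := by
  obtain ⟨f, i, hi, hf⟩ := hnt
  by_contra! h
  exact hf ((mem_ker_iff hhom f).mpr (fun m _ => Nat.le_zero.mp (h m)) i hi)

lemma isRootDegree_orbitDegree (hhom : IsHomogeneousOfDegree δ e) :
    IsRootDegree P e δ.orbitDegree := by
  intro m
  set i := δ.orbitDegree m
  have hc := δ.orbitCoeff_orbitDegree_ne_zero m
  obtain ⟨q, hq⟩ := exists_coe_eq_add_nsmul hhom hc
  refine ⟨hq ▸ q.2, ?_⟩
  rw [show (⟨_, hq ▸ q.2⟩ : P) = q from Subtype.ext hq.symm]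
  by_contra ha
  set a := δ.orbitDegree q
  -- iterativity: `cᵢ(m) δ⁽ᵃ⁾ χ^q = δ⁽ᵃ⁾ δ⁽ⁱ⁾ χᵐ`, a multiple of `δ⁽ᵃ⁺ⁱ⁾ χᵐ = 0`
  have hit := δ.iterative a i (AddMonoidAlgebra.single m 1)
  rw [D_single_eq_single hhom hq, D_single_eq_zero hhom
    (δ.orbitCoeff_eq_zero_of_orbitDegree_lt (by omega : i < a + i)), smul_zero,
    ← mul_one (δ.orbitCoeff i m), ← AddMonoidAlgebra.smul_single', map_smul,
    smul_eq_zero] at hit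
  exact δ.orbitCoeff_orbitDegree_ne_zero q (by simp [orbitCoeff, a, hit.resolve_left hc])

end LFIHD

theorem stmt19_general {n : ℕ} (k : Type*) [Field k]
    (σ : Set (Fin n → ℚ)) (hσpoly : IsPolyhedralCone σ) (hσconv : IsStronglyConvex σ)
    (P : AddSubmonoid (Fin n → ℤ)) (hPmem : ∀ m : Fin n → ℤ, m ∈ P ↔ castZ m ∈ dualCone σ)
    (δ : LFIHD k (AddMonoidAlgebra k P)) (e : Fin n → ℤ)
    (hnt : δ.IsNontrivial) (hhom : IsHomogeneousOfDegree δ e) :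
    (∃ ρ : Fin n → ℤ, IsRayGen σ ρ ∧
      (∀ f : AddMonoidAlgebra k P,
        f ∈ δ.ker ↔ ∀ m : P, f.coeff m ≠ 0 → pairZ (m : Fin n → ℤ) ρ = 0) ∧
      IsDemazureRootWith σ e ρ) ∧
    castZ e ∉ dualCone σ := by
  obtain ⟨S, hS⟩ := hσpoly
  have hd := LFIHD.isRootDegree_orbitDegree hhom
  obtain ⟨m₀, hm₀⟩ := LFIHD.exists_orbitDegree_pos hhom hnt
  obtain ⟨ρ, hρ, heρ, hdρ⟩ := hd.exists_isRayGen hPmem hS hσconv hm₀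
  have hroot : IsDemazureRootWith σ e ρ :=
    ⟨hρ, heρ, fun ρ' hρ' => (le_or_gt 0 (pairZ e ρ')).symm.imp
      (hd.eq_of_pairZ_neg hPmem hρ hdρ hρ') id⟩
  refine ⟨⟨ρ, hρ, fun f => ?_, hroot⟩, hroot.castZ_notMem_dualCone⟩
  rw [LFIHD.mem_ker_iff hhom]
  refine forall_congr' fun m => imp_congr_right fun _ => ?_
  rw [← hdρ m, Nat.cast_eq_zero]

/-- Let `σ ⊆ N_ℚ` be a nonzero strongly convex polyhedral cone and `δ` a
nontrivial homogeneous LFIHD on `A = k[σ^∨ ∩ M]` of degree `e`. Then there is a ray `ρ` of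
`σ` with `ker δ = k[ρ* ∩ M]`, and `e` is a Demazure root of `σ` with distinguished ray `ρ`;
in particular `e ∉ σ^∨`. -/
theorem stmt19 {n : ℕ} (k : Type*) [Field k]
    (σ : Set (Fin n → ℚ)) (hσpoly : IsPolyhedralCone σ) (hσconv : IsStronglyConvex σ)
    (hσne : σ ≠ {0})
    (P : AddSubmonoid (Fin n → ℤ)) (hPmem : ∀ m : Fin n → ℤ, m ∈ P ↔ castZ m ∈ dualCone σ)
    (δ : LFIHD k (AddMonoidAlgebra k P)) (e : Fin n → ℤ)
    (hnt : δ.IsNontrivial) (hhom : IsHomogeneousOfDegree δ e) :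
    (∃ ρ : Fin n → ℤ, IsRayGen σ ρ ∧
      (∀ f : AddMonoidAlgebra k P,
        f ∈ δ.ker ↔ ∀ m : P, f.coeff m ≠ 0 → pairZ (m : Fin n → ℤ) ρ = 0) ∧
      IsDemazureRootWith σ e ρ) ∧
    castZ e ∉ dualCone σ :=
  stmt19_general k σ hσpoly hσconv P hPmem δ e hnt hhom
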